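/- Let n and s be integers with s ≥ 3 and n ≥ 2s + 3, and let F be a stable 3-graph with vertex set [n] that has property U(s, 2s+1), ν(∂F) = s + 1, and ν(∂F − {1}) = s + 1 (where ∂F − {1} denotes the edges of ∂F not containing 1). Let M = { {i+1, 2s+4−i} : 1 ≤ i ≤ s+1 }. Then for any three distinct e₁, e₂, e₃ ∈ M, there do not exist two disjoint edges f₁, f₂ ∈ F with f₁, f₂ ⊆ e₁ ∪ e₂ ∪ e₃ ∪ {1}. -/

import Mathlib

open Finset

/-- `F₁ ≺ F₂`: same size, and the `i`-th smallest element of `F₁` is at most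
the `i`-th smallest element of `F₂`. -/
def PrecS (A B : Finset ℕ) : Prop :=
  A.card = B.card ∧
    ∀ i, i < A.card → (A.sort (· ≤ ·)).getD i 0 ≤ (B.sort (· ≤ ·)).getD i 0

/-- A family of subsets of `[n] = {1,…,n}` is stable (shifted). -/
def IsStable (n : ℕ) (F : Finset (Finset ℕ)) : Prop :=
  ∀ A B : Finset ℕ, A ⊆ Finset.Icc 1 n → B ∈ F → PrecS A B → A ∈ F

/-- Property `U(s, q)`: any `s` edges (repetitions allowed) have union of size at most `q`. -/
def HasU (F : Finset (Finset ℕ)) (s q : ℕ) : Prop :=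
  ∀ f : Fin s → Finset ℕ, (∀ i, f i ∈ F) → (Finset.univ.biUnion f).card ≤ q

/-- Matching number: the maximum size of a set of pairwise disjoint edges of `F`. -/
def matchNum (F : Finset (Finset ℕ)) : ℕ :=
  (F.powerset.filter fun M => ∀ a ∈ M, ∀ b ∈ M, a ≠ b → Disjoint a b).sup Finset.card

/-- Shadow of a 3-uniform family: all 2-element subsets of its edges. -/
def shadow2 (F : Finset (Finset ℕ)) : Finset (Finset ℕ) :=
  F.biUnion fun f => f.powersetCard 2

/-- Deletion of the first `i` vertices: edges disjoint from `[i] = {1,…,i}`. -/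
def del (F : Finset (Finset ℕ)) (i : ℕ) : Finset (Finset ℕ) :=
  F.filter fun e => Disjoint e (Finset.Icc 1 i)

/-!
Take a maximum matching of `∂F - {1}`; its `s + 1` pairs avoid `1`. At most `i - 1` of them meet
`[2, i]`, so the others cover `2 (s + 2 - i)` vertices above `i` and one of them lies above `i` and
reaches `2 s + 4 - i`. Shifting an edge of `F` through that pair down gives
`{1, i + 1, 2 s + 4 - i} ∈ F` for every `i ≤ s + 1`. Now two disjoint edges inside
`e₁ ∪ e₂ ∪ e₃ ∪ {1}`, together with these triples for the `s - 2` other pairs of `M`, are `s`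
edges covering `6 + 2 (s - 2) = 2 s + 2` vertices, against `U(s, 2 s + 1)`.
-/

lemma exists_pairwiseDisjoint_card_eq_matchNum (G : Finset (Finset ℕ)) :
    ∃ M ⊆ G, (M : Set (Finset ℕ)).PairwiseDisjoint id ∧ #M = matchNum G := by
  obtain ⟨M, hM, hsup⟩ := exists_mem_eq_sup
    (G.powerset.filter fun M => ∀ a ∈ M, ∀ b ∈ M, a ≠ b → Disjoint a b) ⟨∅, by simp⟩ card
  obtain ⟨hMG, hdisj⟩ := mem_filter.1 hM
  exact ⟨M, mem_powerset.1 hMG, fun a ha b hb => hdisj a ha b hb, hsup.symm⟩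

lemma card_filter_not_disjoint_le {α : Type*} [DecidableEq α] {M : Finset (Finset α)}
    (hM : (M : Set (Finset α)).PairwiseDisjoint id) (S : Finset α) :
    #(M.filter fun q => ¬Disjoint q S) ≤ #S := by
  calc #(M.filter fun q => ¬Disjoint q S)
      ≤ #((M.filter fun q => ¬Disjoint q S).biUnion (· ∩ S)) :=
        card_le_card_biUnion
          ((hM.subset (coe_subset.2 (filter_subset _ _))).mono fun _ => inter_subset_left)
          fun _ hq => not_disjoint_iff_nonempty_inter.1 (mem_filter.1 hq).2
    _ ≤ #S := card_le_card (biUnion_subset.2 fun _ _ => inter_subset_right)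

lemma exists_mem_add_card_le {V : Finset ℕ} {a : ℕ} (hV : V.Nonempty) (ha : ∀ x ∈ V, a ≤ x) :
    ∃ y ∈ V, a + #V ≤ y + 1 := by
  refine ⟨V.max' hV, V.max'_mem hV, ?_⟩
  have := card_le_card (t := Icc a (V.max' hV)) fun x hx => mem_Icc.2 ⟨ha x hx, V.le_max' x hx⟩
  rw [Nat.card_Icc] at this
  have := hV.card_pos
  omega

lemma exists_pair_ge_of_matching {M : Finset (Finset ℕ)} {m i : ℕ}
    (hM : (M : Set (Finset ℕ)).PairwiseDisjoint id) (hcard : #M = m)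
    (h2 : ∀ q ∈ M, #q = 2) (hge : ∀ q ∈ M, ∀ x ∈ q, 2 ≤ x) (hi : 1 ≤ i) (him : i ≤ m) :
    ∃ q ∈ M, ∃ x ∈ q, ∃ y ∈ q, x ≠ y ∧ i + 1 ≤ x ∧ i + 1 ≤ y ∧ 2 * m + 2 - i ≤ y := by
  have hbad := card_filter_not_disjoint_le hM (Icc 2 i)
  have hsplit := card_filter_add_card_filter_not (s := M) (fun q => Disjoint q (Icc 2 i))
  rw [Nat.card_Icc] at hbad
  set Good := M.filter fun q => Disjoint q (Icc 2 i)
  have hGood : ∀ q ∈ Good, ∀ x ∈ q, i + 1 ≤ x := by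
    intro q hq x hx
    obtain ⟨hqM, hqi⟩ := mem_filter.1 hq
    have hxi : x ∉ Icc 2 i := disjoint_left.1 hqi hx
    have hx2 := hge q hqM x hx
    simp only [mem_Icc, not_and, not_le] at hxi
    omega
  have hVcard : #(Good.biUnion id) = 2 * #Good := by
    rw [card_biUnion (hM.subset (coe_subset.2 (filter_subset _ _))), mul_comm]
    exact sum_const_nat fun q hq => h2 q (mem_filter.1 hq).1
  have hVne : (Good.biUnion id).Nonempty := by
    rw [← card_pos]
    omega
  obtain ⟨y, hyV, hy⟩ := exists_mem_add_card_le hVne fun x hx => by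
    obtain ⟨q, hq, hxq⟩ := mem_biUnion.1 hx
    exact hGood q hq x hxq
  obtain ⟨q, hq, hyq⟩ := mem_biUnion.1 hyV
  obtain ⟨x, hxq, hxy⟩ := exists_mem_ne (by rw [h2 q (mem_filter.1 hq).1]; omega) y
  exact ⟨q, (mem_filter.1 hq).1, x, hxq, y, hyq, hxy, hGood q hq x hxq, hGood q hq y hyq,
    by omega⟩

lemma exists_lt_lt_eq_triple {B : Finset ℕ} (hB : #B = 3) :
    ∃ a b c, a < b ∧ b < c ∧ B = {a, b, c} := by
  have hlen : (B.sort (· ≤ ·)).length = 3 := by rw [length_sort, hB]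
  have hsorted := B.sortedLT_sort.pairwise
  have hB' := B.sort_toFinset (· ≤ ·)
  rcases hl : B.sort (· ≤ ·) with _ | ⟨a, _ | ⟨b, _ | ⟨c, _ | _⟩⟩⟩ <;>
    simp only [hl, List.length_cons, List.length_nil] at hlen <;> try omega
  simp only [hl, List.pairwise_cons, List.mem_cons, List.not_mem_nil] at hsorted hB'
  refine ⟨a, b, c, hsorted.1 b (by simp), hsorted.2.1 c (by simp), ?_⟩
  rw [← hB']
  simp

lemma sort_triple {a b c : ℕ} (hab : a < b) (hbc : b < c) :
    ({a, b, c} : Finset ℕ).sort (· ≤ ·) = [a, b, c] := by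
  rw [sort_insert (· ≤ ·) (by grind) (by grind),
    sort_insert (· ≤ ·) (by grind) (by grind), sort_singleton]

lemma card_triple {a b c : ℕ} (hab : a < b) (hbc : b < c) : #({a, b, c} : Finset ℕ) = 3 := by
  rw [← length_sort (· ≤ ·), sort_triple hab hbc]
  rfl

lemma precS_triple {a b c a' b' c' : ℕ} (hab : a < b) (hbc : b < c) (hab' : a' < b')
    (hbc' : b' < c') (ha : a ≤ a') (hb : b ≤ b') (hc : c ≤ c') :
    PrecS {a, b, c} {a', b', c'} := by
  refine ⟨by rw [card_triple hab hbc, card_triple hab' hbc'], fun k hk => ?_⟩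
  rw [card_triple hab hbc] at hk
  rw [sort_triple hab hbc, sort_triple hab' hbc']
  interval_cases k <;> simpa

lemma IsStable.triple_one_mem {n : ℕ} {F : Finset (Finset ℕ)} (hst : IsStable n F) {f : Finset ℕ}
    (hf : f ∈ F) (hfn : f ⊆ Icc 1 n) (hf3 : #f = 3) {x y a b : ℕ} (hx : x ∈ f) (hy : y ∈ f)
    (hxy : x ≠ y) (hax : a ≤ x) (hay : a ≤ y) (hby : b ≤ y) (ha : 1 < a) (hab : a < b)
    (hbn : b ≤ n) : {1, a, b} ∈ F := by
  obtain ⟨a', b', c', hab', hbc', rfl⟩ := exists_lt_lt_eq_triple hf3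
  have ha' : 1 ≤ a' := (mem_Icc.1 (hfn (by simp))).1
  simp only [mem_insert, mem_singleton] at hx hy
  refine hst _ _ ?_ hf (precS_triple ha hab hab' hbc' ha' (by omega) (by omega))
  intro z hz
  simp only [mem_insert, mem_singleton] at hz
  rw [mem_Icc]
  omega

lemma HasU.card_biUnion_le {F : Finset (Finset ℕ)} {s q : ℕ} (hU : HasU F s q)
    {G : Finset (Finset ℕ)} (hGF : G ⊆ F) (hG : G.Nonempty) (hGs : #G ≤ s) :
    #(G.biUnion id) ≤ q := by
  have : Nonempty G := hG.to_subtype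
  let e : G ↪ Fin s := G.equivFin.toEmbedding.trans (Fin.castLEEmb hGs)
  let f : Fin s → Finset ℕ := fun k => (Function.invFun e k : G)
  refine le_trans (card_le_card fun x hx => ?_) (hU f fun k => hGF (Function.invFun e k : G).2)
  obtain ⟨g, hg, hxg⟩ := mem_biUnion.1 hx
  obtain ⟨k, hk⟩ := Function.invFun_surjective e.injective ⟨g, hg⟩
  exact mem_biUnion.2 ⟨k, mem_univ _, by simpa [f, hk] using hxg⟩

def mirrorPair (s i : ℕ) : Finset ℕ := {i + 1, 2 * s + 4 - i}

lemma card_mirrorPair (s i : ℕ) : #(mirrorPair s i) = 2 :=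
  card_pair_eq_two_iff.2 (by omega)

lemma pairwiseDisjoint_mirrorPair (s : ℕ) :
    ((Icc 1 (s + 1) : Finset ℕ) : Set ℕ).PairwiseDisjoint (mirrorPair s) := by
  intro i hi j hj hij
  simp only [coe_Icc, Set.mem_Icc] at hi hj
  rw [Function.onFun, disjoint_left]
  intro x hxi hxj
  simp only [mirrorPair, mem_insert, mem_singleton] at hxi hxj
  omega

lemma one_notMem_mirrorPair {s i : ℕ} (hi : i ∈ Icc 1 (s + 1)) : 1 ∉ mirrorPair s i := by
  simp only [mem_Icc] at hi
  simp only [mirrorPair, mem_insert, mem_singleton]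
  omega

lemma insert_one_mirrorPair_mem {n s : ℕ} (hn : 2 * s + 3 ≤ n) {F : Finset (Finset ℕ)}
    (hF : ∀ e ∈ F, e ⊆ Icc 1 n ∧ #e = 3) (hst : IsStable n F)
    (hnus1 : matchNum ((shadow2 F).filter fun e => 1 ∉ e) = s + 1) :
    ∀ i ∈ Icc 1 (s + 1), insert 1 (mirrorPair s i) ∈ F := by
  obtain ⟨M, hMG, hM, hMcard⟩ := exists_pairwiseDisjoint_card_eq_matchNum
    ((shadow2 F).filter fun e => 1 ∉ e)
  have hshadow : ∀ q ∈ M, (∃ f ∈ F, q ⊆ f) ∧ #q = 2 ∧ ∀ x ∈ q, 2 ≤ x := by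
    intro q hq
    obtain ⟨hq, hq1⟩ := mem_filter.1 (hMG hq)
    obtain ⟨f, hf, hqf⟩ := mem_biUnion.1 hq
    obtain ⟨hqf, hq2⟩ := mem_powersetCard.1 hqf
    refine ⟨⟨f, hf, hqf⟩, hq2, fun x hx => ?_⟩
    have := (mem_Icc.1 ((hF f hf).1 (hqf hx))).1
    have : x ≠ 1 := by rintro rfl; exact hq1 hx
    omega
  intro i hi
  rw [mem_Icc] at hi
  obtain ⟨q, hq, x, hx, y, hy, hxy, hix, hiy, hiy'⟩ := exists_pair_ge_of_matching hM
    (hMcard.trans hnus1) (fun q hq => (hshadow q hq).2.1) (fun q hq => (hshadow q hq).2.2) hi.1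
    hi.2
  obtain ⟨f, hf, hqf⟩ := (hshadow q hq).1
  exact hst.triple_one_mem hf (hF f hf).1 (hF f hf).2 (hqf hx) (hqf hy) hxy hix hiy (by omega)
    (by omega) (by omega) (by omega)

lemma false_of_disjoint_subset_mirrorPairs {s : ℕ} {F : Finset (Finset ℕ)}
    (hF : ∀ e ∈ F, #e = 3) (hU : HasU F s (2 * s + 1))
    (hT : ∀ i ∈ Icc 1 (s + 1), insert 1 (mirrorPair s i) ∈ F)
    {A : Finset ℕ} (hA : A ⊆ Icc 1 (s + 1)) (hA3 : #A = 3) {f₁ f₂ : Finset ℕ} (hf₁ : f₁ ∈ F)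
    (hf₂ : f₂ ∈ F) (hdisj : Disjoint f₁ f₂) (hsub₁ : f₁ ⊆ insert 1 (A.biUnion (mirrorPair s)))
    (hsub₂ : f₂ ⊆ insert 1 (A.biUnion (mirrorPair s))) : False := by
  set R := Icc 1 (s + 1) \ A
  have hRcard : #R = s + 1 - 3 := by
    rw [card_sdiff_of_subset hA, Nat.card_Icc, hA3]
    omega
  have hA_le := card_le_card hA
  rw [Nat.card_Icc, hA3] at hA_le
  set G := insert f₁ (insert f₂ (R.image fun i => insert 1 (mirrorPair s i)))
  have hGF : G ⊆ F := by
    refine insert_subset hf₁ (insert_subset hf₂ (image_subset_iff.2 fun i hi => ?_))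
    exact hT i (sdiff_subset hi)
  have hGs : #G ≤ s :=
    calc #G ≤ #(R.image fun i => insert 1 (mirrorPair s i)) + 1 + 1 :=
          (card_insert_le _ _).trans (Nat.succ_le_succ (card_insert_le _ _))
      _ ≤ #R + 1 + 1 := by gcongr; exact card_image_le
      _ ≤ s := by omega
  have hsub : f₁ ∪ f₂ ∪ R.biUnion (mirrorPair s) ⊆ G.biUnion id := by
    intro x hx
    simp only [G, mem_union, mem_biUnion, mem_insert, mem_image, id] at hx ⊢
    rcases hx with (hx | hx) | ⟨i, hi, hx⟩
    · exact ⟨f₁, Or.inl rfl, hx⟩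
    · exact ⟨f₂, Or.inr (Or.inl rfl), hx⟩
    · exact ⟨_, Or.inr (Or.inr ⟨i, hi, rfl⟩), mem_insert_of_mem hx⟩
  have hRdisj : Disjoint (insert 1 (A.biUnion (mirrorPair s))) (R.biUnion (mirrorPair s)) := by
    rw [disjoint_left]
    intro x hx hx'
    obtain ⟨i, hi, hxi⟩ := mem_biUnion.1 hx'
    obtain ⟨hiI, hiA⟩ := mem_sdiff.1 hi
    rcases mem_insert.1 hx with rfl | hx
    · exact one_notMem_mirrorPair hiI hxi
    · obtain ⟨a, ha, hxa⟩ := mem_biUnion.1 hx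
      exact disjoint_left.1
        (pairwiseDisjoint_mirrorPair s (hA ha) hiI (by rintro rfl; exact hiA ha)) hxa hxi
  have hcard : #(f₁ ∪ f₂ ∪ R.biUnion (mirrorPair s)) = 6 + 2 * #R := by
    rw [card_union_of_disjoint (disjoint_of_subset_left (union_subset hsub₁ hsub₂) hRdisj),
      card_union_of_disjoint hdisj, hF f₁ hf₁, hF f₂ hf₂,
      card_biUnion ((pairwiseDisjoint_mirrorPair s).subset (coe_subset.2 sdiff_subset)),
      sum_const_nat fun i _ => card_mirrorPair s i, mul_comm]
  have := (card_le_card hsub).trans (hU.card_biUnion_le hGF (insert_nonempty _ _) hGs)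
  omega

theorem case2_claim2_general (n s : ℕ) (hn : 2 * s + 3 ≤ n)
    (F : Finset (Finset ℕ))
    (hF : ∀ e ∈ F, e ⊆ Finset.Icc 1 n ∧ e.card = 3)
    (hst : IsStable n F)
    (hU : HasU F s (2 * s + 1))
    (hnus1 : matchNum ((shadow2 F).filter fun e => 1 ∉ e) = s + 1) :
    ∀ e₁ ∈ (Finset.Icc 1 (s + 1)).image (fun i => ({i + 1, 2 * s + 4 - i} : Finset ℕ)),
      ∀ e₂ ∈ (Finset.Icc 1 (s + 1)).image (fun i => ({i + 1, 2 * s + 4 - i} : Finset ℕ)),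
        ∀ e₃ ∈ (Finset.Icc 1 (s + 1)).image (fun i => ({i + 1, 2 * s + 4 - i} : Finset ℕ)),
          e₁ ≠ e₂ → e₁ ≠ e₃ → e₂ ≠ e₃ →
            ¬ ∃ f₁ ∈ F, ∃ f₂ ∈ F, Disjoint f₁ f₂ ∧
              f₁ ⊆ e₁ ∪ e₂ ∪ e₃ ∪ {1} ∧ f₂ ⊆ e₁ ∪ e₂ ∪ e₃ ∪ {1} := by
  intro e₁ he₁ e₂ he₂ e₃ he₃ h₁₂ h₁₃ h₂₃ ⟨f₁, hf₁, f₂, hf₂, hdisj, hsub₁, hsub₂⟩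
  obtain ⟨a₁, ha₁, rfl⟩ := mem_image.1 he₁
  obtain ⟨a₂, ha₂, rfl⟩ := mem_image.1 he₂
  obtain ⟨a₃, ha₃, rfl⟩ := mem_image.1 he₃
  have hA3 : #({a₁, a₂, a₃} : Finset ℕ) = 3 := card_eq_three.2
    ⟨a₁, a₂, a₃, by rintro rfl; exact h₁₂ rfl, by rintro rfl; exact h₁₃ rfl,
      by rintro rfl; exact h₂₃ rfl, rfl⟩
  have hA : {a₁, a₂, a₃} ⊆ Icc 1 (s + 1) := by
    simp only [insert_subset_iff, singleton_subset_iff]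
    exact ⟨ha₁, ha₂, ha₃⟩
  have hW : mirrorPair s a₁ ∪ mirrorPair s a₂ ∪ mirrorPair s a₃ ∪ {1} =
      insert 1 (({a₁, a₂, a₃} : Finset ℕ).biUnion (mirrorPair s)) := by
    ext x
    simp only [mem_union, mem_insert, mem_singleton, biUnion_insert, singleton_biUnion]
    tauto
  exact false_of_disjoint_subset_mirrorPairs (fun e he => (hF e he).2) hU
    (insert_one_mirrorPair_mem hn hF hst hnus1) hA hA3 hf₁ hf₂ hdisj (hW ▸ hsub₁) (hW ▸ hsub₂)

/-- Claim 2 of Case 2 in Lemma 3.5: for distinct e₁, e₂, e₃ in the matching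
M = {{i+1, 2s+4-i} : 1 ≤ i ≤ s+1}, the restriction of F to e₁ ∪ e₂ ∪ e₃ ∪ {1}
contains no matching of size two. -/
theorem case2_claim2 (n s : ℕ) (hs : 3 ≤ s) (hn : 2 * s + 3 ≤ n)
    (F : Finset (Finset ℕ))
    (hF : ∀ e ∈ F, e ⊆ Finset.Icc 1 n ∧ e.card = 3)
    (hst : IsStable n F)
    (hU : HasU F s (2 * s + 1))
    (hnus : matchNum (shadow2 F) = s + 1)
    (hnus1 : matchNum ((shadow2 F).filter fun e => 1 ∉ e) = s + 1) :
    ∀ e₁ ∈ (Finset.Icc 1 (s + 1)).image (fun i => ({i + 1, 2 * s + 4 - i} : Finset ℕ)),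
      ∀ e₂ ∈ (Finset.Icc 1 (s + 1)).image (fun i => ({i + 1, 2 * s + 4 - i} : Finset ℕ)),
        ∀ e₃ ∈ (Finset.Icc 1 (s + 1)).image (fun i => ({i + 1, 2 * s + 4 - i} : Finset ℕ)),
          e₁ ≠ e₂ → e₁ ≠ e₃ → e₂ ≠ e₃ →
            ¬ ∃ f₁ ∈ F, ∃ f₂ ∈ F, Disjoint f₁ f₂ ∧
              f₁ ⊆ e₁ ∪ e₂ ∪ e₃ ∪ {1} ∧ f₂ ⊆ e₁ ∪ e₂ ∪ e₃ ∪ {1} :=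
  case2_claim2_general n s hn F hF hst hU hnus1
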